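/- arXiv:1701.00740 — 5 statements merged into one kernel-verified Lean document; each statement's English description precedes it below -/
import Mathlib

section
/- Let n = 3, f the squared Euclidean distance (fᵢ(δᵢ) = dᵢ²δᵢ²), slopes mᵢ = wᵢ/dᵢ with m₁ ≥ m₂ ≥ m₃ and m₁ > m₃, and suppose w₂ ≤ d₂·m̄₂ where m̄₂ = (m₁+m₃)/2. Then for all μ ∈ [0, μ₁] (with μ₁ the money threshold), the optimal disclosure is δ₂* = 0 and δᵢ* = v_{i,2} μ/(2dᵢ) for i = 1,3, where v_{i,2} = (mᵢ − m̄₂)/σ²_{m₂} and σ²_{m₂} is the variance of {m₁,m₃}; the resulting optimal value is R(μ) = μ²/(2σ²_{m₂}). -/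
/-!
Write `aᵢ = dᵢδᵢ`. The constraints become `∑ aᵢ = 0` and `∑ mᵢaᵢ = μ`, and the objective is
`∑ aᵢ²`. Centring the slopes at `m̄₂` gives `μ = ∑ (mᵢ - m̄₂)aᵢ`, and the hypothesis
`w₂ ≤ d₂m̄₂` makes the middle term nonpositive, so Cauchy–Schwarz on the two outer terms yields
`μ² ≤ 2σ²_{m₂} ∑ aᵢ²`. The two-active profile `aᵢ ∝ mᵢ - m̄₂` attains equality, and below the
money threshold it stays inside the box.
-/

open Finset

theorem pos_of_forall_le_of_sum_eq_zero {ι : Type*} [Fintype ι] {d m : ι → ℝ}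
    (hd : ∑ j, d j = 0) (hmd : ∀ j, 0 < m j * d j) {i : ι} (hi : ∀ j, m j ≤ m i) :
    0 < d i := by
  by_contra! hdi
  have hmi : m i < 0 := neg_of_mul_pos_left (hmd i) hdi
  have hneg : ∑ j, d j < 0 :=
    sum_neg (fun j _ => neg_of_mul_pos_right (hmd j) ((hi j).trans hmi.le)) ⟨i, mem_univ i⟩
  linarith

theorem neg_of_forall_ge_of_sum_eq_zero {ι : Type*} [Fintype ι] {d m : ι → ℝ}
    (hd : ∑ j, d j = 0) (hmd : ∀ j, 0 < m j * d j) {i : ι} (hi : ∀ j, m i ≤ m j) :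
    d i < 0 := by
  have := pos_of_forall_le_of_sum_eq_zero (d := -d) (m := -m) (by simp [hd])
    (fun j => by simpa using hmd j) (fun j => by simpa using hi j)
  simpa using this

theorem sq_le_centered_sq_mul_sum_sq (m a : Fin 3 → ℝ) (c : ℝ) (ha : ∑ i, a i = 0)
    (h₁ : (m 1 - c) * a 1 ≤ 0) (hμ : 0 ≤ ∑ i, m i * a i) :
    (∑ i, m i * a i) ^ 2 ≤ ((m 0 - c) ^ 2 + (m 2 - c) ^ 2) * ∑ i, a i ^ 2 := by
  simp only [Fin.sum_univ_three] at ha hμ ⊢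
  have hcentred : m 0 * a 0 + m 1 * a 1 + m 2 * a 2 ≤ (m 0 - c) * a 0 + (m 2 - c) * a 2 := by
    linear_combination h₁ + c * ha
  calc (m 0 * a 0 + m 1 * a 1 + m 2 * a 2) ^ 2
      ≤ ((m 0 - c) * a 0 + (m 2 - c) * a 2) ^ 2 := pow_le_pow_left₀ hμ hcentred 2
    _ ≤ ((m 0 - c) ^ 2 + (m 2 - c) ^ 2) * (a 0 ^ 2 + a 2 ^ 2) := by
      nlinarith [sq_nonneg ((m 0 - c) * a 2 - (m 2 - c) * a 0)]
    _ ≤ ((m 0 - c) ^ 2 + (m 2 - c) ^ 2) * (a 0 ^ 2 + a 1 ^ 2 + a 2 ^ 2) := by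
      gcongr; nlinarith [sq_nonneg (a 1)]

theorem sq_le_centered_sq_mul_sum_mul_sq (d m w η : Fin 3 → ℝ) (c μ : ℝ)
    (hw : ∀ i, w i = m i * d i) (hc : w 1 ≤ d 1 * c) (hη₁ : 0 ≤ η 1) (hμ : 0 ≤ μ)
    (hηd : ∑ i, d i * η i = 0) (hηw : ∑ i, w i * η i = μ) :
    μ ^ 2 ≤ ((m 0 - c) ^ 2 + (m 2 - c) ^ 2) * ∑ i, d i ^ 2 * η i ^ 2 := by
  have hmiddle : (m 1 - c) * (d 1 * η 1) ≤ 0 := by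
    rw [← mul_assoc]
    exact mul_nonpos_of_nonpos_of_nonneg (by linarith [hw 1]) hη₁
  have hηw' : ∑ i, m i * (d i * η i) = μ := by simpa only [← mul_assoc, ← hw] using hηw
  simpa only [hηw', mul_pow] using
    sq_le_centered_sq_mul_sum_sq m (fun i => d i * η i) c hηd hmiddle (hηw' ▸ hμ)

theorem div_mul_div_two_mul_mem_Icc {x s μ d : ℝ} (hxd : 0 < x * d) (hs : 0 < s) (hμ : 0 ≤ μ)
    (hμle : μ ≤ 2 * d * s / x) : x / s * μ / (2 * d) ∈ Set.Icc 0 1 := by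
  have hdx : 0 < d / x := div_pos_iff.2 ((mul_pos_iff.1 hxd).imp And.symm And.symm)
  have hB : 0 < 2 * d * s / x := by
    rw [show 2 * d * s / x = 2 * s * (d / x) by ring]
    exact mul_pos (by positivity) hdx
  have hrewrite : x / s * μ / (2 * d) = μ / (2 * d * s / x) := by
    have := hxd.ne'
    field_simp
  rw [hrewrite]
  exact ⟨div_nonneg hμ hB.le, (div_le_one hB).mpr hμle⟩

/-- `(m i - c) / s` is the paper's `v_{i,2}`, so `d i * twoActive … i = v_{i,2} μ / 2` for `i ≠ 1`. -/
noncomputable def twoActive (d m : Fin 3 → ℝ) (c s μ : ℝ) : Fin 3 → ℝ :=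
  fun i => if i = 1 then 0 else (m i - c) / s * μ / (2 * d i)

section twoActive

variable {d m : Fin 3 → ℝ} {c s μ : ℝ}

theorem twoActive_mem_Icc (h₀ : 0 < (m 0 - c) * d 0) (h₂ : 0 < (m 2 - c) * d 2) (hs : 0 < s)
    (hμ : 0 ≤ μ) (hμle : μ ≤ min (2 * d 0 * s / (m 0 - c)) (2 * d 2 * s / (m 2 - c))) (i : Fin 3) :
    twoActive d m c s μ i ∈ Set.Icc 0 1 := by
  fin_cases i
  · exact div_mul_div_two_mul_mem_Icc h₀ hs hμ (hμle.trans (min_le_left _ _))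
  · simp [twoActive]
  · exact div_mul_div_two_mul_mem_Icc h₂ hs hμ (hμle.trans (min_le_right _ _))

theorem twoActive_one : twoActive d m c s μ 1 = 0 := by
  simp [twoActive]

theorem mul_twoActive {i : Fin 3} (hi : i ≠ 1) (hdi : d i ≠ 0) :
    d i * twoActive d m c s μ i = (m i - c) / s * μ / 2 := by
  simp only [twoActive, if_neg hi]
  field_simp

variable (hd₀ : d 0 ≠ 0) (hd₂ : d 2 ≠ 0)
include hd₀ hd₂

theorem sum_mul_twoActive (hc : c = (m 0 + m 2) / 2) : ∑ i, d i * twoActive d m c s μ i = 0 := by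
  rw [Fin.sum_univ_three, mul_twoActive (by decide) hd₀, mul_twoActive (by decide) hd₂,
    twoActive_one, hc]
  ring

theorem sum_slope_mul_twoActive (hs : s ≠ 0) (hc : c = (m 0 + m 2) / 2)
    (hs2 : s = ((m 0 - c) ^ 2 + (m 2 - c) ^ 2) / 2) :
    ∑ i, m i * d i * twoActive d m c s μ i = μ := by
  simp only [Fin.sum_univ_three, mul_assoc]
  rw [mul_twoActive (by decide) hd₀, mul_twoActive (by decide) hd₂, twoActive_one]
  field_simp
  rw [hs2, hc]
  ring

theorem sum_sq_mul_twoActive_sq (hs : s ≠ 0) (hs2 : s = ((m 0 - c) ^ 2 + (m 2 - c) ^ 2) / 2) :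
    ∑ i, d i ^ 2 * twoActive d m c s μ i ^ 2 = μ ^ 2 / (2 * s) := by
  simp only [Fin.sum_univ_three, ← mul_pow]
  rw [mul_twoActive (by decide) hd₀, mul_twoActive (by decide) hd₂, twoActive_one]
  field_simp
  rw [hs2]
  ring

end twoActive

theorem n3_sed_solution_two_active_general
    (p q w : Fin 3 → ℝ)
    (hps : ∑ i, p i = 1) (hqs : ∑ i, q i = 1)
    (hpq : ∀ i, p i ≠ q i) (hw : ∀ i, 0 < w i)
    (d m : Fin 3 → ℝ) (hd : ∀ i, d i = q i - p i)
    (hm : ∀ i, m i = w i / d i)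
    (hord : m 0 ≥ m 1 ∧ m 1 ≥ m 2) (hord13 : m 0 > m 2)
    (mbar s2 μ₁ : ℝ)
    (hmbar : mbar = (m 0 + m 2) / 2)
    (hs2 : s2 = ((m 0 - mbar) ^ 2 + (m 2 - mbar) ^ 2) / 2)
    (hcond : w 1 ≤ d 1 * mbar)
    (hμ₁ : μ₁ = min (2 * d 0 * s2 / (m 0 - mbar)) (2 * d 2 * s2 / (m 2 - mbar)))
    (μ : ℝ) (hμ : μ ∈ Set.Icc 0 μ₁)
    (δstar : Fin 3 → ℝ)
    (hδstar : δstar = fun i => if i = 1 then 0 else (m i - mbar) / s2 * μ / (2 * d i)) :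
    ((∀ i, δstar i ∈ Set.Icc (0:ℝ) 1) ∧
      ∑ i, d i * δstar i = 0 ∧ ∑ i, w i * δstar i = μ) ∧
    (∀ η : Fin 3 → ℝ,
      (∀ i, η i ∈ Set.Icc (0:ℝ) 1) → ∑ i, d i * η i = 0 → ∑ i, w i * η i = μ →
      ∑ i, (d i) ^ 2 * (δstar i) ^ 2 ≤ ∑ i, (d i) ^ 2 * (η i) ^ 2) ∧
    ∑ i, (d i) ^ 2 * (δstar i) ^ 2 = μ ^ 2 / (2 * s2) := by
  obtain ⟨hμ0, hμle⟩ := hμ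
  have hd0 : ∀ i, d i ≠ 0 := fun i => by rw [hd i]; exact sub_ne_zero.mpr (hpq i).symm
  have hw' : ∀ i, w i = m i * d i := fun i => by rw [hm i, div_mul_cancel₀ _ (hd0 i)]
  have hdsum : ∑ i, d i = 0 := by simp [hd, sum_sub_distrib, hps, hqs]
  have hmd : ∀ i, 0 < m i * d i := fun i => hw' i ▸ hw i
  have hdpos : 0 < d 0 := pos_of_forall_le_of_sum_eq_zero hdsum hmd fun j => by
    fin_cases j <;> simp only [Fin.zero_eta, Fin.mk_one, Fin.reduceFinMk] <;> linarith
  have hdneg : d 2 < 0 := neg_of_forall_ge_of_sum_eq_zero hdsum hmd fun j => by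
    fin_cases j <;> simp only [Fin.zero_eta, Fin.mk_one, Fin.reduceFinMk] <;> linarith
  have hs2pos : 0 < s2 := by rw [hs2, hmbar]; nlinarith
  have hvalue := sum_sq_mul_twoActive_sq (μ := μ) (hd0 0) (hd0 2) hs2pos.ne' hs2
  replace hδstar : δstar = twoActive d m mbar s2 μ := hδstar
  subst hδstar
  refine ⟨⟨twoActive_mem_Icc ?_ ?_ hs2pos hμ0 (hμ₁ ▸ hμle), sum_mul_twoActive (hd0 0) (hd0 2) hmbar,
    by simpa only [hw'] using sum_slope_mul_twoActive (hd0 0) (hd0 2) hs2pos.ne' hmbar hs2⟩,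
    fun η hη hηd hηw => ?_, hvalue⟩
  · exact mul_pos (by linarith) hdpos
  · exact mul_pos_of_neg_of_neg (by linarith) hdneg
  have hbound := sq_le_centered_sq_mul_sum_mul_sq d m w η mbar μ hw' hcond (hη 1).1 hμ0 hηd hηw
  rw [show (m 0 - mbar) ^ 2 + (m 2 - mbar) ^ 2 = 2 * s2 by rw [hs2]; ring] at hbound
  rw [hvalue, div_le_iff₀ (by positivity)]
  linarith

theorem n3_sed_solution_two_active
    (p q w : Fin 3 → ℝ)
    (hp : ∀ i, 0 < p i) (hq : ∀ i, 0 < q i)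
    (hps : ∑ i, p i = 1) (hqs : ∑ i, q i = 1)
    (hpq : ∀ i, p i ≠ q i) (hw : ∀ i, 0 < w i)
    (d m : Fin 3 → ℝ) (hd : ∀ i, d i = q i - p i)
    (hm : ∀ i, m i = w i / d i)
    (hord : m 0 ≥ m 1 ∧ m 1 ≥ m 2) (hord13 : m 0 > m 2)
    (mbar s2 μ₁ : ℝ)
    (hmbar : mbar = (m 0 + m 2) / 2)
    (hs2 : s2 = ((m 0 - mbar) ^ 2 + (m 2 - mbar) ^ 2) / 2)
    (hcond : w 1 ≤ d 1 * mbar)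
    (hμ₁ : μ₁ = min (2 * d 0 * s2 / (m 0 - mbar)) (2 * d 2 * s2 / (m 2 - mbar)))
    (μ : ℝ) (hμ : μ ∈ Set.Icc 0 μ₁)
    (δstar : Fin 3 → ℝ)
    (hδstar : δstar = fun i => if i = 1 then 0 else (m i - mbar) / s2 * μ / (2 * d i)) :
    ((∀ i, δstar i ∈ Set.Icc (0:ℝ) 1) ∧
      ∑ i, d i * δstar i = 0 ∧ ∑ i, w i * δstar i = μ) ∧
    (∀ η : Fin 3 → ℝ,
      (∀ i, η i ∈ Set.Icc (0:ℝ) 1) → ∑ i, d i * η i = 0 → ∑ i, w i * η i = μ →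
      ∑ i, (d i) ^ 2 * (δstar i) ^ 2 ≤ ∑ i, (d i) ^ 2 * (η i) ^ 2) ∧
    ∑ i, (d i) ^ 2 * (δstar i) ^ 2 = μ ^ 2 / (2 * s2) :=
  n3_sed_solution_two_active_general p q w hps hqs hpq hw d m hd hm hord hord13 mbar s2 μ₁ hmbar hs2
    hcond hμ₁ μ hμ δstar hδstar
end

section
/- Let n = 3 with the SED privacy function and suppose 0 < δᵢ < 1 for i=1,3 and δ₂=0 at the optimum. Then the Lagrange multipliers of the equality constraints are α = −(m̄₂/σ²_{m₂})μ and β = μ/σ²_{m₂}, where m̄₂ and σ²_{m₂} are the mean and variance of {m₁, m₃}. -/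
open Finset

theorem n3_sed_multipliers_two_active
    (p q w : Fin 3 → ℝ)
    (hp : ∀ i, 0 < p i) (hq : ∀ i, 0 < q i)
    (hps : ∑ i, p i = 1) (hqs : ∑ i, q i = 1)
    (hpq : ∀ i, p i ≠ q i) (hw : ∀ i, 0 < w i)
    (d m : Fin 3 → ℝ) (hd : ∀ i, d i = q i - p i)
    (hm : ∀ i, m i = w i / d i)
    (hord13 : m 0 > m 2)
    (mbar s2 : ℝ)
    (hmbar : mbar = (m 0 + m 2) / 2)
    (hs2 : s2 = ((m 0 - mbar) ^ 2 + (m 2 - mbar) ^ 2) / 2)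
    (δ : Fin 3 → ℝ) (α β μ : ℝ)
    (hδ0 : δ 0 = α / (2 * d 0) + w 0 * β / (2 * (d 0) ^ 2))
    (hδ2 : δ 2 = α / (2 * d 2) + w 2 * β / (2 * (d 2) ^ 2))
    (hδ1 : δ 1 = 0)
    (hint0 : 0 < δ 0 ∧ δ 0 < 1) (hint2 : 0 < δ 2 ∧ δ 2 < 1)
    (hc1 : d 0 * δ 0 + d 2 * δ 2 = 0)
    (hc2 : w 0 * δ 0 + w 2 * δ 2 = μ) :
    α = -(mbar / s2) * μ ∧ β = μ / s2 := by
  have hd0 : d 0 ≠ 0 := by rw [hd]; exact sub_ne_zero.mpr (Ne.symm (hpq 0))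
  have hd2 : d 2 ≠ 0 := by rw [hd]; exact sub_ne_zero.mpr (Ne.symm (hpq 2))
  have hm0 : m 0 = w 0 / d 0 := hm 0
  have hm2 : m 2 = w 2 / d 2 := hm 2
  have k0 : d 0 * δ 0 = α / 2 + m 0 * β / 2 := by
    rw [hδ0, hm0]; field_simp
  have k2 : d 2 * δ 2 = α / 2 + m 2 * β / 2 := by
    rw [hδ2, hm2]; field_simp
  have l0 : w 0 * δ 0 = m 0 * α / 2 + m 0 ^ 2 * β / 2 := by
    rw [hδ0, hm0]; field_simp
  have l2 : w 2 * δ 2 = m 2 * α / 2 + m 2 ^ 2 * β / 2 := by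
    rw [hδ2, hm2]; field_simp
  have e1 : α + (m 0 + m 2) / 2 * β = 0 := by
    rw [k0, k2] at hc1; linarith
  have e2 : (m 0 + m 2) / 2 * α + (m 0 ^ 2 + m 2 ^ 2) / 2 * β = μ := by
    rw [l0, l2] at hc2; linarith
  have hs2v : s2 = (m 0 - m 2) ^ 2 / 4 := by rw [hs2, hmbar]; ring
  have hne : m 0 - m 2 ≠ 0 := sub_ne_zero.mpr (ne_of_gt hord13)
  have hs2ne : s2 ≠ 0 := by rw [hs2v]; positivity
  have hβ : β = μ / s2 := by
    field_simp
    linear_combination e2 - (m 0 + m 2) / 2 * e1 + β * hs2v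
  have hα : α = -mbar * β := by rw [hmbar]; linarith
  exact ⟨by rw [hα, hβ]; ring, hβ⟩
end

section
/- Let n = 3 with the SED privacy function and suppose all three components of the optimum are interior (0 < δᵢ < 1). Then the multipliers are α = −2m̄₀μ/(3σ²_{m₀}) and β = 2μ/(3σ²_{m₀}), where m̄₀ and σ²_{m₀} > 0 are the mean and variance of {m₁,m₂,m₃}; consequently δᵢ* = v_{i,0}μ/(3dᵢ) with v_{i,0} = (mᵢ−m̄₀)/σ²_{m₀}, and the optimal value is R(μ) = μ²/(3σ²_{m₀}). -/
/-!
With `xᵢ = dᵢ δᵢ` and `wᵢ = mᵢ dᵢ`, stationarity reads `xᵢ = (α + mᵢ β) / 2`, so the two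
constraints become linear equations in `(α, β)`: `Σ xᵢ = 0` forces `α = -m̄ β`, and then
`Σ mᵢ xᵢ = μ` forces `β · n σ² = 2μ`. Hence `xᵢ = μ (mᵢ - m̄) / (n σ²)` and
`Σ xᵢ² = μ² / (n σ²)`. The variance is positive because `Σ mᵢ dᵢ = Σ wᵢ > 0` while
`Σ dᵢ = 0`, so `m` cannot be constant.
-/

open Finset

variable {ι : Type*} [Fintype ι]

noncomputable def popMean (m : ι → ℝ) : ℝ := (∑ i, m i) / Fintype.card ι

noncomputable def popVar (m : ι → ℝ) : ℝ := (∑ i, (m i - popMean m) ^ 2) / Fintype.card ι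

lemma card_mul_popMean [Nonempty ι] (m : ι → ℝ) :
    (Fintype.card ι : ℝ) * popMean m = ∑ i, m i := by
  rw [popMean, mul_div_cancel₀ _ (Nat.cast_ne_zero.mpr Fintype.card_ne_zero)]

lemma card_mul_popVar [Nonempty ι] (m : ι → ℝ) :
    (Fintype.card ι : ℝ) * popVar m = ∑ i, (m i - popMean m) ^ 2 := by
  rw [popVar, mul_div_cancel₀ _ (Nat.cast_ne_zero.mpr Fintype.card_ne_zero)]

lemma sum_sub_popMean (m : ι → ℝ) : ∑ i, (m i - popMean m) = 0 := by
  cases isEmpty_or_nonempty ι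
  · simp
  · rw [sum_sub_distrib, sum_const, card_univ, nsmul_eq_mul, card_mul_popMean, sub_self]

lemma sum_mul_sub_popMean (m : ι → ℝ) :
    ∑ i, m i * (m i - popMean m) = ∑ i, (m i - popMean m) ^ 2 := by
  calc ∑ i, m i * (m i - popMean m)
      = ∑ i, ((m i - popMean m) ^ 2 + popMean m * (m i - popMean m)) :=
        sum_congr rfl fun i _ => by ring
    _ = ∑ i, (m i - popMean m) ^ 2 := by
        rw [sum_add_distrib, ← mul_sum, sum_sub_popMean, mul_zero, add_zero]

lemma nonempty_of_popVar_ne_zero {m : ι → ℝ} (hs : popVar m ≠ 0) : Nonempty ι := by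
  by_contra h
  simp [popVar, not_nonempty_iff.mp h] at hs

lemma popVar_pos_of_sum_mul_ne_zero {m d : ι → ℝ} (hd : ∑ i, d i = 0)
    (hmd : ∑ i, m i * d i ≠ 0) : 0 < popVar m := by
  refine (by unfold popVar; positivity : 0 ≤ popVar m).lt_of_ne fun hs => hmd ?_
  obtain ⟨i₀, -, -⟩ := exists_ne_zero_of_sum_ne_zero hmd
  have : Nonempty ι := ⟨i₀⟩
  have hsq : ∑ i, (m i - popMean m) ^ 2 = 0 := by rw [← card_mul_popVar, ← hs, mul_zero]
  have hconst : ∀ i, m i = popMean m := fun i =>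
    sub_eq_zero.mp <| pow_eq_zero_iff two_ne_zero |>.mp <|
      (sum_eq_zero_iff_of_nonneg fun j _ => sq_nonneg _).mp hsq i (mem_univ i)
  simp only [hconst, ← mul_sum, hd, mul_zero]

section Stationary

variable {m x : ι → ℝ} {α β μ : ℝ}

lemma eq_neg_popMean_mul_of_stationary [Nonempty ι]
    (hx : ∀ i, x i = (α + m i * β) / 2) (h1 : ∑ i, x i = 0) : α = -(popMean m * β) := by
  have hn : (Fintype.card ι : ℝ) ≠ 0 := Nat.cast_ne_zero.mpr Fintype.card_ne_zero
  refine mul_left_cancel₀ hn ?_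
  simp only [hx, ← sum_div, sum_add_distrib, ← sum_mul, sum_const, card_univ,
    nsmul_eq_mul] at h1
  rw [mul_neg, ← mul_assoc, card_mul_popMean]
  linarith

lemma stationary_eq_of_popVar_ne_zero (hs : popVar m ≠ 0)
    (hx : ∀ i, x i = (α + m i * β) / 2) (h1 : ∑ i, x i = 0) (h2 : ∑ i, m i * x i = μ) :
    α = -(2 * popMean m * μ) / (Fintype.card ι * popVar m) ∧
    β = 2 * μ / (Fintype.card ι * popVar m) ∧
    (∀ i, x i = (m i - popMean m) / popVar m * μ / Fintype.card ι) ∧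
    ∑ i, x i ^ 2 = μ ^ 2 / (Fintype.card ι * popVar m) := by
  have : Nonempty ι := nonempty_of_popVar_ne_zero hs
  have hα := eq_neg_popMean_mul_of_stationary hx h1
  have hxβ : ∀ i, x i = β * (m i - popMean m) / 2 := fun i => by rw [hx, hα]; ring
  have hμ : μ = β * (Fintype.card ι * popVar m) / 2 := by
    rw [← h2, card_mul_popVar, ← sum_mul_sub_popMean, mul_sum, sum_div]
    exact sum_congr rfl fun i _ => by rw [hxβ]; ring
  refine ⟨?_, ?_, fun i => ?_, ?_⟩
  · rw [hα, hμ]; field_simp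
  · rw [hμ]; field_simp
  · rw [hxβ, hμ]; field_simp
  · have hsq : ∑ i, x i ^ 2 = β ^ 2 / 4 * (Fintype.card ι * popVar m) := by
      rw [card_mul_popVar, mul_sum]
      exact sum_congr rfl fun i _ => by rw [hxβ]; ring
    rw [hsq, hμ]
    field_simp
    ring

end Stationary

theorem n3_sed_multipliers_all_interior_general
    (p q w : Fin 3 → ℝ)
    (hps : ∑ i, p i = 1) (hqs : ∑ i, q i = 1)
    (hpq : ∀ i, p i ≠ q i) (hw : ∀ i, 0 < w i)
    (d m : Fin 3 → ℝ) (hd : ∀ i, d i = q i - p i)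
    (hm : ∀ i, m i = w i / d i)
    (mbar0 s0 : ℝ)
    (hmbar0 : mbar0 = (m 0 + m 1 + m 2) / 3)
    (hs0 : s0 = (∑ i, (m i - mbar0) ^ 2) / 3)
    (δ : Fin 3 → ℝ) (α β μ : ℝ)
    (hδ : ∀ i, δ i = α / (2 * d i) + w i * β / (2 * (d i) ^ 2))
    (hc1 : ∑ i, d i * δ i = 0)
    (hc2 : ∑ i, w i * δ i = μ) :
    0 < s0 ∧
    α = -(2 * mbar0 * μ) / (3 * s0) ∧ β = 2 * μ / (3 * s0) ∧
    (∀ i, δ i = (m i - mbar0) / s0 * μ / (3 * d i)) ∧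
    ∑ i, (d i) ^ 2 * (δ i) ^ 2 = μ ^ 2 / (3 * s0) := by
  have hd0 : ∀ i, d i ≠ 0 := fun i => by rw [hd]; exact sub_ne_zero.mpr (hpq i).symm
  have hw_eq : ∀ i, w i = m i * d i := fun i => by rw [hm, div_mul_cancel₀ _ (hd0 i)]
  have hdsum : ∑ i, d i = 0 := by simp only [hd, sum_sub_distrib, hps, hqs, sub_self]
  have hmean : popMean m = mbar0 := by simp [popMean, Fin.sum_univ_three, hmbar0]
  have hvar : popVar m = s0 := by simp [popVar, hmean, hs0]
  have hs0pos : 0 < s0 := hvar ▸ popVar_pos_of_sum_mul_ne_zero hdsum <| by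
    simp_rw [← hw_eq]; exact (sum_pos (fun i _ => hw i) univ_nonempty).ne'
  have hx : ∀ i, d i * δ i = (α + m i * β) / 2 := fun i => by
    rw [hδ, hw_eq]; field_simp [hd0 i]
  have h2 : ∑ i, m i * (d i * δ i) = μ := by simp_rw [← mul_assoc, ← hw_eq]; exact hc2
  obtain ⟨hα, hβ, hxs, hR⟩ := stationary_eq_of_popVar_ne_zero (hvar ▸ hs0pos.ne') hx hc1 h2
  simp only [Fintype.card_fin, hmean, hvar, Nat.cast_ofNat] at hα hβ hxs hR
  refine ⟨hs0pos, hα, hβ, fun i => ?_, ?_⟩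
  · rw [eq_div_iff (mul_ne_zero three_ne_zero (hd0 i))]
    linear_combination 3 * hxs i
  · simp_rw [← mul_pow]; exact hR

theorem n3_sed_multipliers_all_interior
    (p q w : Fin 3 → ℝ)
    (hp : ∀ i, 0 < p i) (hq : ∀ i, 0 < q i)
    (hps : ∑ i, p i = 1) (hqs : ∑ i, q i = 1)
    (hpq : ∀ i, p i ≠ q i) (hw : ∀ i, 0 < w i)
    (d m : Fin 3 → ℝ) (hd : ∀ i, d i = q i - p i)
    (hm : ∀ i, m i = w i / d i)
    (mbar0 s0 : ℝ)
    (hmbar0 : mbar0 = (m 0 + m 1 + m 2) / 3)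
    (hs0 : s0 = (∑ i, (m i - mbar0) ^ 2) / 3)
    (δ : Fin 3 → ℝ) (α β μ : ℝ)
    (hδ : ∀ i, δ i = α / (2 * d i) + w i * β / (2 * (d i) ^ 2))
    (hint : ∀ i, 0 < δ i ∧ δ i < 1)
    (hc1 : ∑ i, d i * δ i = 0)
    (hc2 : ∑ i, w i * δ i = μ) :
    0 < s0 ∧
    α = -(2 * mbar0 * μ) / (3 * s0) ∧ β = 2 * μ / (3 * s0) ∧
    (∀ i, δ i = (m i - mbar0) / s0 * μ / (3 * d i)) ∧
    ∑ i, (d i) ^ 2 * (δ i) ^ 2 = μ ^ 2 / (3 * s0) :=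
  n3_sed_multipliers_all_interior_general p q w hps hqs hpq hw d m hd hm mbar0 s0 hmbar0 hs0 δ α β μ
    hδ hc1 hc2
end

section
/- In a conical regular configuration, every pairwise intersection point γ_{i,j}^{a,b} of boundary hyperplanes (with (i,a) ≠ (j,b), excluding γ_{1,n}^{1,1}) lies on some lower hyperplane: there exists k with dₖα + wₖβ = f'ₖ(0) at γ = γ_{i,j}^{a,b}. -/
/-!
Indices are 1-based here, as in the paper. A point on a lower hyperplane is its own witness, and
strictly ordered slopes make any two hyperplanes meet in at most one point; so only intersections of
two upper hyperplanes `i ≠ j` need an argument.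

If `i = 1` then `j < n`, and `γ` is the solution of the first regularity system at `j + 1`, which
lies on the lower hyperplane of `j + 1`. If `i, j ≥ 2`, the second regularity systems chain
together: the solution `p` at `3` lies on the lower hyperplane of `1` and on the upper hyperplanes
of `2` and `3`, and the system at `k + 1` shares with `p` the lower hyperplane of `1` and the upper
hyperplane of `k`, so its solution is `p` again. Hence every upper hyperplane of `2, …, n` passes
through `p`, and `γ = p`.
-/
def hyperplane (a b c : ℝ) : Set (ℝ × ℝ) := {γ | a * γ.1 + b * γ.2 = c}

theorem hyperplane_inter_subsingleton {a b c d e f : ℝ} (h : a * d - c * b ≠ 0) :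
    (hyperplane a b e ∩ hyperplane c d f).Subsingleton := by
  rintro p ⟨hp₁, hp₂⟩ q ⟨hq₁, hq₂⟩
  simp only [hyperplane, Set.mem_ofPred_eq] at hp₁ hp₂ hq₁ hq₂
  exact Prod.ext
    (mul_left_cancel₀ h (by linear_combination d * hp₁ - b * hp₂ - d * hq₁ + b * hq₂))
    (mul_left_cancel₀ h (by linear_combination a * hp₂ - c * hp₁ - a * hq₂ + c * hq₁))

theorem mul_sub_mul_ne_zero_of_div_ne_div {a b c d : ℝ} (hb : b ≠ 0) (hd : d ≠ 0)
    (h : a / b ≠ c / d) : a * d - c * b ≠ 0 := by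
  rw [Ne, div_eq_div_iff hb hd] at h
  exact sub_ne_zero.2 h

theorem Fin.mem_of_consecutive_meet {α : Type*} {n a : ℕ} {P : Fin n → Set α} {M : Set α}
    (hM : ∀ k : Fin n, a ≤ k.val → (P k ∩ M).Subsingleton)
    (hstep : ∀ (k : ℕ) (hk : k + 1 < n), a ≤ k →
      ∃ q ∈ M, q ∈ P ⟨k, by omega⟩ ∧ q ∈ P ⟨k + 1, hk⟩)
    {p : α} (ha : a < n) (hpa : p ∈ P ⟨a, ha⟩) (hpM : p ∈ M) :
    ∀ k : Fin n, a ≤ k.val → p ∈ P k := by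
  rintro ⟨k, hk⟩ (hak : a ≤ k)
  induction k, hak using Nat.le_induction with
  | base => exact hpa
  | succ k hak ih =>
    obtain ⟨q, hqM, hqk, hqk₁⟩ := hstep k hk hak
    have hpq : p = q := hM ⟨k, by omega⟩ hak ⟨ih (by omega), hpM⟩ ⟨hqk, hqM⟩
    exact hpq ▸ hqk₁

section Configuration

variable {n : ℕ} {d w g0 g1 : Fin n → ℝ}

theorem mem_lower_of_mem_upper_first
    (hdet : ∀ i j : Fin n, i ≠ j → d i * w j - d j * w i ≠ 0)
    (hreg1 : ∀ (i : ℕ) (_ : 2 ≤ i) (hi : i < n),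
      ∃! γ : ℝ × ℝ,
        d ⟨i, hi⟩ * γ.1 + w ⟨i, hi⟩ * γ.2 = g0 ⟨i, hi⟩ ∧
        d ⟨i - 1, Nat.sub_lt_of_lt hi⟩ * γ.1 + w ⟨i - 1, Nat.sub_lt_of_lt hi⟩ * γ.2 =
          g1 ⟨i - 1, Nat.sub_lt_of_lt hi⟩ ∧
        d ⟨0, Nat.zero_lt_of_lt hi⟩ * γ.1 + w ⟨0, Nat.zero_lt_of_lt hi⟩ * γ.2 =
          g1 ⟨0, Nat.zero_lt_of_lt hi⟩)
    {i j : Fin n} (hij : i ≠ j) (hi : i.val = 0) (hj : j.val + 1 < n) {γ : ℝ × ℝ}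
    (hγi : γ ∈ hyperplane (d i) (w i) (g1 i)) (hγj : γ ∈ hyperplane (d j) (w j) (g1 j)) :
    ∃ k : Fin n, γ ∈ hyperplane (d k) (w k) (g0 k) := by
  have hj0 : j.val ≠ 0 := fun h => hij (Fin.ext (hi.trans h.symm))
  rw [show i = ⟨0, by omega⟩ from Fin.ext hi] at hij hγi
  obtain ⟨q, ⟨hq_lower, hq_j, hq_first⟩, -⟩ := hreg1 (j.val + 1) (by omega) hj
  have hγq : γ = q :=
    hyperplane_inter_subsingleton (hdet _ _ hij) ⟨hγi, hγj⟩ ⟨hq_first, hq_j⟩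
  exact ⟨⟨j.val + 1, hj⟩, hγq ▸ hq_lower⟩

theorem mem_lower_first_of_mem_upper_inner
    (hdet : ∀ i j : Fin n, i ≠ j → d i * w j - d j * w i ≠ 0)
    (hreg2 : ∀ (i : ℕ) (_ : 2 ≤ i) (hi : i < n),
      ∃! γ : ℝ × ℝ,
        d ⟨i, hi⟩ * γ.1 + w ⟨i, hi⟩ * γ.2 = g1 ⟨i, hi⟩ ∧
        d ⟨i - 1, Nat.sub_lt_of_lt hi⟩ * γ.1 + w ⟨i - 1, Nat.sub_lt_of_lt hi⟩ * γ.2 =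
          g1 ⟨i - 1, Nat.sub_lt_of_lt hi⟩ ∧
        d ⟨0, Nat.zero_lt_of_lt hi⟩ * γ.1 + w ⟨0, Nat.zero_lt_of_lt hi⟩ * γ.2 =
          g0 ⟨0, Nat.zero_lt_of_lt hi⟩)
    {i j : Fin n} (hij : i ≠ j) (hi : i.val ≠ 0) (hj : j.val ≠ 0) {γ : ℝ × ℝ}
    (hγi : γ ∈ hyperplane (d i) (w i) (g1 i)) (hγj : γ ∈ hyperplane (d j) (w j) (g1 j)) :
    ∃ k : Fin n, γ ∈ hyperplane (d k) (w k) (g0 k) := by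
  have hn : 2 < n := by
    have := Fin.val_ne_of_ne hij; have := i.isLt; have := j.isLt; omega
  let first : Fin n := ⟨0, by omega⟩
  obtain ⟨p, ⟨-, hp₁, hp_lower⟩, -⟩ := hreg2 2 le_rfl hn
  have hp_upper : ∀ k : Fin n, 1 ≤ k.val → p ∈ hyperplane (d k) (w k) (g1 k) := by
    refine Fin.mem_of_consecutive_meet (M := hyperplane (d first) (w first) (g0 first))
      (fun k hk => hyperplane_inter_subsingleton (hdet _ _ ?_)) (fun k hk _ => ?_)
      (by omega) hp₁ hp_lower
    · exact Fin.ne_of_val_ne (by change k.val ≠ 0; omega)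
    · obtain ⟨q, ⟨hq₁, hq₀, hq_lower⟩, -⟩ := hreg2 (k + 1) (by omega) hk
      exact ⟨q, hq_lower, hq₀, hq₁⟩
  have hγp : γ = p := hyperplane_inter_subsingleton (hdet _ _ hij) ⟨hγi, hγj⟩
    ⟨hp_upper i (by omega), hp_upper j (by omega)⟩
  exact ⟨first, hγp ▸ hp_lower⟩

end Configuration

theorem conical_regular_intersections_on_lower_hyperplanes
    (n : ℕ) (d w : Fin n → ℝ)
    (hw : ∀ i, 0 < w i)
    (g0 g1 : Fin n → ℝ)
    -- slopes ordered: 1/m₁ > 1/m₂ > ⋯ > 1/mₙ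
    (hord : ∀ i j : Fin n, i < j → d i / w i > d j / w j)
    -- conical regular configuration
    (hreg1 : ∀ (i : ℕ) (hi2 : 2 ≤ i) (hi : i < n),
      ∃! γ : ℝ × ℝ,
        d ⟨i, hi⟩ * γ.1 + w ⟨i, hi⟩ * γ.2 = g0 ⟨i, hi⟩ ∧
        d ⟨i - 1, by omega⟩ * γ.1 + w ⟨i - 1, by omega⟩ * γ.2 = g1 ⟨i - 1, by omega⟩ ∧
        d ⟨0, by omega⟩ * γ.1 + w ⟨0, by omega⟩ * γ.2 = g1 ⟨0, by omega⟩)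
    (hreg2 : ∀ (i : ℕ) (hi2 : 2 ≤ i) (hi : i < n),
      ∃! γ : ℝ × ℝ,
        d ⟨i, hi⟩ * γ.1 + w ⟨i, hi⟩ * γ.2 = g1 ⟨i, hi⟩ ∧
        d ⟨i - 1, by omega⟩ * γ.1 + w ⟨i - 1, by omega⟩ * γ.2 = g1 ⟨i - 1, by omega⟩ ∧
        d ⟨0, by omega⟩ * γ.1 + w ⟨0, by omega⟩ * γ.2 = g0 ⟨0, by omega⟩) :
    ∀ (i j : Fin n) (a b : Bool) (γ : ℝ × ℝ), i ≠ j →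
      d i * γ.1 + w i * γ.2 = (if a then g1 i else g0 i) →
      d j * γ.1 + w j * γ.2 = (if b then g1 j else g0 j) →
      ¬(a = true ∧ b = true ∧
        ((i.val = 0 ∧ j.val = n - 1) ∨ (i.val = n - 1 ∧ j.val = 0))) →
      ∃ k : Fin n, d k * γ.1 + w k * γ.2 = g0 k := by
  have hslope : StrictAnti fun i => d i / w i := hord
  have hdet : ∀ i j : Fin n, i ≠ j → d i * w j - d j * w i ≠ 0 := fun i j hij =>
    mul_sub_mul_ne_zero_of_div_ne_div (hw i).ne' (hw j).ne' (hslope.injective.ne hij)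
  intro i j a b γ hij hγi hγj hnot
  cases a
  · exact ⟨i, by simpa using hγi⟩
  cases b
  · exact ⟨j, by simpa using hγj⟩
  simp only [↓reduceIte, true_and] at hγi hγj hnot
  have := i.isLt; have := j.isLt
  rcases eq_or_ne i.val 0 with hi | hi
  · exact mem_lower_of_mem_upper_first hdet hreg1 hij hi (by omega) hγi hγj
  rcases eq_or_ne j.val 0 with hj | hj
  · exact mem_lower_of_mem_upper_first hdet hreg1 hij.symm hj (by omega) hγj hγi
  · exact mem_lower_first_of_mem_upper_inner hdet hreg2 hij hi hj hγi hγj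
end

section
/- Under a conical regular configuration with the SED privacy function, for indices k ∈ {n+2,…,2n}, j ∈ {1,…,2(n+1)−k} with μ_{k+1,j} < μ_{k,j}, and any μ ∈ (μ_{k+1,j}, μ_{k,j}], the linear system Σᵢ dᵢδᵢ = 0, Σᵢ wᵢδᵢ = μ with δᵢ = 1 for i ≥ n−j+2, δᵢ = 0 for i ≤ k−n−1, and δᵢ = α/(2dᵢ) + wᵢβ/(2dᵢ²) otherwise has the unique solution β = 2(μ − W_{n−j+2} + A_{n−j+2}·m̄_S)/((n−|S|)σ²_{m_S}) and α = −m̄_S β + 2A_{n−j+2}/(|S|−n), where S = S(k,j) = {1,…,k−n−1} ∪ {n−j+2,…,n}. -/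
open Finset

theorem conical_regular_sed_multipliers
    (n : ℕ) (hn : 3 ≤ n) (d w : Fin n → ℝ)
    (hd : ∀ i, d i ≠ 0) (hds : ∑ i, d i = 0) (hw : ∀ i, 0 < w i)
    (m : Fin n → ℝ) (hm : ∀ i, m i = w i / d i)
    -- slopes ordered: 1/m₁ > ⋯ > 1/mₙ (conical regular configuration)
    (hord : ∀ i j : Fin n, i < j → d i / w i > d j / w j)
    (k j : ℕ) (hk1 : n + 2 ≤ k) (hk2 : k ≤ 2 * n)
    (hj1 : 1 ≤ j) (hj2 : j ≤ 2 * (n + 1) - k)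
    -- index sets: S = {1,…,k−n−1} ∪ {n−j+2,…,n} (1-based), Sc its complement
    (S Sc Sc' : Finset (Fin n))
    (hS : S = Finset.univ.filter (fun i : Fin n => i.val ≤ k - n - 2 ∨ n - j + 1 ≤ i.val))
    (hSc : Sc = Finset.univ.filter (fun i : Fin n => k - n - 1 ≤ i.val ∧ i.val ≤ n - j))
    (hSc' : Sc' = Finset.univ.filter (fun i : Fin n => k - n ≤ i.val ∧ i.val ≤ n - j))
    -- tail sums A_{n−j+2} and W_{n−j+2}
    (A W : ℝ)
    (hA : A = ∑ i ∈ Finset.univ.filter (fun i : Fin n => n - j + 1 ≤ i.val), d i)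
    (hW : W = ∑ i ∈ Finset.univ.filter (fun i : Fin n => n - j + 1 ≤ i.val), w i)
    -- mean and variance of the slopes outside S (resp. outside S(k+1,j))
    (mbarS s2 mbarS' s2' : ℝ)
    (hmbarS : mbarS = (∑ i ∈ Sc, m i) / Sc.card)
    (hs2 : s2 = (∑ i ∈ Sc, (m i - mbarS) ^ 2) / Sc.card)
    (hs2pos : 0 < s2)
    (hmbarS' : mbarS' = (∑ i ∈ Sc', m i) / Sc'.card)
    (hs2' : s2' = (∑ i ∈ Sc', (m i - mbarS') ^ 2) / Sc'.card)
    -- money thresholds μ_{k,j} and μ_{k+1,j}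
    (μkj μk1j : ℝ)
    (hμkj : μkj = W - A * (mbarS + s2 / (mbarS - m ⟨k - n - 2, by omega⟩)))
    (hμk1j : μk1j = W - A * (mbarS' + s2' / (mbarS' - m ⟨k - n - 1, by omega⟩)))
    (hlt : μk1j < μkj)
    (μ : ℝ) (hμ : μ ∈ Set.Ioc μk1j μkj)
    -- the pattern of active components and the equality constraints
    (δ : Fin n → ℝ) (α β : ℝ)
    (hones : ∀ i : Fin n, n - j + 1 ≤ i.val → δ i = 1)
    (hzeros : ∀ i : Fin n, i.val ≤ k - n - 2 → δ i = 0)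
    (hmid : ∀ i : Fin n, k - n - 1 ≤ i.val → i.val ≤ n - j →
      δ i = α / (2 * d i) + w i * β / (2 * (d i) ^ 2))
    (hc1 : ∑ i, d i * δ i = 0)
    (hc2 : ∑ i, w i * δ i = μ) :
    β = 2 * (μ - W + A * mbarS) / (((n : ℝ) - S.card) * s2) ∧
    α = -mbarS * β + 2 * A / ((S.card : ℝ) - n) := by
  have hcne : (Sc.card : ℝ) ≠ 0 := by
    intro h
    rw [hs2, h, div_zero] at hs2pos
    exact lt_irrefl 0 hs2pos
  have hs2ne : s2 ≠ 0 := ne_of_gt hs2pos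
  -- split of sums over univ into F1 ∪ F0 ∪ Sc
  have split : ∀ f : Fin n → ℝ, ∑ i, f i =
      ∑ i ∈ Finset.univ.filter (fun i : Fin n => n - j + 1 ≤ i.val), f i +
      (∑ i ∈ Finset.univ.filter (fun i : Fin n => i.val ≤ k - n - 2), f i +
       ∑ i ∈ Sc, f i) := by
    intro f
    rw [← Finset.sum_filter_add_sum_filter_not Finset.univ
      (fun i : Fin n => n - j + 1 ≤ i.val) f]
    congr 1
    rw [← Finset.sum_filter_add_sum_filter_not
      (Finset.univ.filter (fun i : Fin n => ¬ (n - j + 1 ≤ i.val)))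
      (fun i : Fin n => i.val ≤ k - n - 2) f]
    congr 1
    · apply Finset.sum_congr _ (fun _ _ => rfl)
      rw [Finset.filter_filter]
      ext i
      simp only [Finset.mem_filter, Finset.mem_univ, true_and]
      omega
    · apply Finset.sum_congr _ (fun _ _ => rfl)
      rw [Finset.filter_filter, hSc]
      ext i
      simp only [Finset.mem_filter, Finset.mem_univ, true_and]
      omega
  -- cardinality relation
  have hcard : (S.card : ℝ) + (Sc.card : ℝ) = (n : ℝ) := by
    have h1 : S.card + Sc.card = n := by
      have h2 : Sc = Finset.univ.filter
          (fun i : Fin n => ¬ (i.val ≤ k - n - 2 ∨ n - j + 1 ≤ i.val)) := by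
        rw [hSc]
        apply Finset.filter_congr
        intro i _
        omega
      rw [hS, h2, Finset.card_filter_add_card_filter_not, Finset.card_univ,
        Fintype.card_fin]
    exact_mod_cast congrArg (Nat.cast : ℕ → ℝ) h1
  -- abbreviations
  set M1 : ℝ := ∑ i ∈ Sc, m i with hM1
  set M2 : ℝ := ∑ i ∈ Sc, (m i) ^ 2 with hM2
  have hmem : ∀ i ∈ Sc, k - n - 1 ≤ i.val ∧ i.val ≤ n - j := by
    intro i hi
    rw [hSc] at hi
    simpa using hi
  -- first constraint
  have e1 : A + ((Sc.card : ℝ) * α + M1 * β) / 2 = 0 := by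
    rw [split (fun i => d i * δ i)] at hc1
    have t1 : ∑ i ∈ Finset.univ.filter (fun i : Fin n => n - j + 1 ≤ i.val),
        d i * δ i = A := by
      rw [hA]
      apply Finset.sum_congr rfl
      intro i hi
      rw [hones i (by simpa using hi), mul_one]
    have t0 : ∑ i ∈ Finset.univ.filter (fun i : Fin n => i.val ≤ k - n - 2),
        d i * δ i = 0 := by
      apply Finset.sum_eq_zero
      intro i hi
      rw [hzeros i (by simpa using hi), mul_zero]
    have tm : ∑ i ∈ Sc, d i * δ i = ((Sc.card : ℝ) * α + M1 * β) / 2 := by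
      have step : ∀ i ∈ Sc, d i * δ i = α / 2 + m i * (β / 2) := by
        intro i hi
        obtain ⟨h1, h2⟩ := hmem i hi
        have hdi := hd i
        rw [hmid i h1 h2, hm i]
        field_simp
      rw [Finset.sum_congr rfl step, Finset.sum_add_distrib, Finset.sum_const,
        nsmul_eq_mul, ← Finset.sum_mul, ← hM1]
      ring
    rw [t1, t0, tm] at hc1
    linarith
  -- second constraint
  have e2 : W + (M1 * α + M2 * β) / 2 = μ := by
    rw [split (fun i => w i * δ i)] at hc2
    have t1 : ∑ i ∈ Finset.univ.filter (fun i : Fin n => n - j + 1 ≤ i.val),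
        w i * δ i = W := by
      rw [hW]
      apply Finset.sum_congr rfl
      intro i hi
      rw [hones i (by simpa using hi), mul_one]
    have t0 : ∑ i ∈ Finset.univ.filter (fun i : Fin n => i.val ≤ k - n - 2),
        w i * δ i = 0 := by
      apply Finset.sum_eq_zero
      intro i hi
      rw [hzeros i (by simpa using hi), mul_zero]
    have tm : ∑ i ∈ Sc, w i * δ i = (M1 * α + M2 * β) / 2 := by
      have step : ∀ i ∈ Sc, w i * δ i = m i * (α / 2) + m i ^ 2 * (β / 2) := by
        intro i hi
        obtain ⟨h1, h2⟩ := hmem i hi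
        have hdi := hd i
        rw [hmid i h1 h2, hm i]
        field_simp
      rw [Finset.sum_congr rfl step, Finset.sum_add_distrib,
        ← Finset.sum_mul, ← Finset.sum_mul, ← hM1, ← hM2]
      ring
    rw [t1, t0, tm] at hc2
    linarith
  -- mean and variance identities
  have hmbar : mbarS * (Sc.card : ℝ) = M1 := by
    rw [hmbarS]; exact div_mul_cancel₀ _ hcne
  have hvar : s2 * (Sc.card : ℝ) * (Sc.card : ℝ) = M2 * (Sc.card : ℝ) - M1 * M1 := by
    have hsum : ∑ i ∈ Sc, (m i - mbarS) ^ 2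
        = M2 - 2 * mbarS * M1 + (Sc.card : ℝ) * mbarS ^ 2 := by
      have step : ∀ i ∈ Sc, (m i - mbarS) ^ 2
          = m i ^ 2 - 2 * mbarS * m i + mbarS ^ 2 := by
        intro i _
        ring
      rw [Finset.sum_congr rfl step, Finset.sum_add_distrib,
        Finset.sum_sub_distrib, Finset.sum_const, ← Finset.mul_sum,
        nsmul_eq_mul, ← hM1, ← hM2]
    have hs2c : s2 * (Sc.card : ℝ)
        = M2 - 2 * mbarS * M1 + (Sc.card : ℝ) * mbarS ^ 2 := by
      rw [hs2, hsum, div_mul_cancel₀ _ hcne]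
    calc s2 * (Sc.card : ℝ) * (Sc.card : ℝ)
        = (M2 - 2 * mbarS * M1 + (Sc.card : ℝ) * mbarS ^ 2) * (Sc.card : ℝ) := by
          rw [hs2c]
      _ = M2 * (Sc.card : ℝ) - 2 * (mbarS * (Sc.card : ℝ)) * M1
          + (mbarS * (Sc.card : ℝ)) * (mbarS * (Sc.card : ℝ)) := by ring
      _ = M2 * (Sc.card : ℝ) - M1 * M1 := by rw [hmbar]; ring
  -- solve the linear system
  have hnS : (n : ℝ) - (S.card : ℝ) = (Sc.card : ℝ) := by linarith
  have hSn : (S.card : ℝ) - (n : ℝ) = -(Sc.card : ℝ) := by linarith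
  constructor
  · rw [hnS, eq_div_iff (mul_ne_zero hcne hs2ne)]
    have hβc : β * ((Sc.card : ℝ) * s2) * (Sc.card : ℝ)
        = 2 * (μ - W + A * mbarS) * (Sc.card : ℝ) := by
      linear_combination β * hvar + 2 * (Sc.card : ℝ) * e2 - 2 * M1 * e1
        - 2 * A * hmbar
    exact mul_right_cancel₀ hcne hβc
  · rw [hSn]
    have hαc : α * (Sc.card : ℝ) = (-mbarS * β) * (Sc.card : ℝ) - 2 * A := by
      linear_combination 2 * e1 + β * hmbar
    rw [div_neg]
    apply mul_right_cancel₀ hcne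
    have hcc : 2 * A / (Sc.card : ℝ) * (Sc.card : ℝ) = 2 * A :=
      div_mul_cancel₀ _ hcne
    linear_combination hαc + hcc
end
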